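/- Let σ be a Lie algebra automorphism of HV, c ∈ ℂ*, and e ∈ ℂ* such that σ(L_{0,i}) − c^{i−1} L_{0,i} ∈ H for all i ∈ ℤ₊ and σ(H_{0,0}) = e H_{0,0}. Then σ(H_{0,j}) = e c^{j} H_{0,j} for every j ∈ ℤ₊. -/

import Mathlib

/-- The generalized Heisenberg–Virasoro algebra `HV(Γ)`: a complex Lie algebra `V` equipped
with a basis `{L_{α,i}, H_{α,i} | α ∈ Γ, i ∈ ℤ₊}` satisfying the defining bracket relations
(any term whose second index would be `-1` has coefficient `0`, so truncated subtraction
on `ℕ` is harmless). -/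
structure HVData (Γ : AddSubgroup ℂ) (V : Type*) [LieRing V] [LieAlgebra ℂ V] where
  L : Γ → ℕ → V
  H : Γ → ℕ → V
  basis : Module.Basis ((↥Γ × ℕ) ⊕ (↥Γ × ℕ)) ℂ V
  basis_inl : ∀ (α : Γ) (i : ℕ), basis (Sum.inl (α, i)) = L α i
  basis_inr : ∀ (α : Γ) (i : ℕ), basis (Sum.inr (α, i)) = H α i
  lie_L_L : ∀ (α β : Γ) (i j : ℕ),
    ⁅L α i, L β j⁆ = ((β : ℂ) - (α : ℂ)) • L (α + β) (i + j)
      + ((j : ℂ) - (i : ℂ)) • L (α + β) (i + j - 1)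
  lie_L_H : ∀ (α β : Γ) (i j : ℕ),
    ⁅L α i, H β j⁆ = (β : ℂ) • H (α + β) (i + j) + (j : ℂ) • H (α + β) (i + j - 1)
  lie_H_H : ∀ (α β : Γ) (i j : ℕ), ⁅H α i, H β j⁆ = 0

namespace HVData

variable {Γ : AddSubgroup ℂ} {V : Type*} [LieRing V] [LieAlgebra ℂ V]

/-- The abelian ideal `H` of `HV`, as a submodule. -/
noncomputable def Hspan (hv : HVData Γ V) : Submodule ℂ V :=
  Submodule.span ℂ (Set.range fun p : ↥Γ × ℕ => hv.H p.1 p.2)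

/-- The graded piece `HV_α = span{L_{α,i}, H_{α,i} | i ∈ ℤ₊}`. -/
noncomputable def grade (hv : HVData Γ V) (α : Γ) : Submodule ℂ V :=
  Submodule.span ℂ (Set.range (hv.L α) ∪ Set.range (hv.H α))

/-- A derivation `D` has degree `γ` if `D (HV_α) ⊆ HV_{α+γ}` for all `α ∈ Γ`. -/
def HasDegree (hv : HVData Γ V) (D : LieDerivation ℂ V V) (γ : Γ) : Prop :=
  ∀ α : Γ, ∀ x ∈ hv.grade α, D x ∈ hv.grade (α + γ)

end HVData


/-
Every `H_{0,j}` is a bracket `[L_{0,j}, H_{0,1}]`, and `H` is an abelian ideal, so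
`σ(H_{0,j}) = [c^{j-1} L_{0,j} + h, σ(H_{0,1})]` with `h ∈ H` reduces everything to `j = 1`.
For `j = 1`, applying `σ` to `[L_{0,1}, H_{0,1}] = H_{0,1}` makes `u = σ(H_{0,1})` an
eigenvector of `ad L_{0,1}` with eigenvalue `1` modulo `H`. On each column `{L_{β,m}}_m` or `{H_{β,m}}_m`
the operator `ad L_{0,1}` acts by `β`·(shift up) + diagonal, so finiteness of the support
forces all coefficients of `u` to vanish except those at `L_{0,2}` and `H_{0,1}`. The
coefficient at `L_{0,2}` is then killed by `σ` applied to `[L_{0,0}, H_{0,1}] = H_{0,0}`,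
which also pins down the coefficient at `H_{0,1}`.
-/

theorem eq_zero_of_recurrence {K : Type*} [Field K] {g : ℕ → K}
    (hg : g.HasFiniteSupport) {β μ : K} (h₀ : μ * g 0 = 0)
    (hrec : ∀ m : ℕ, β * g m + ((m : K) + 1 - μ) * g (m + 1) = 0) {m : ℕ}
    (hm : β ≠ 0 ∨ (m : K) ≠ μ) : g m = 0 := by
  by_cases hβ : β = 0
  · have hmμ : (m : K) ≠ μ := hm.resolve_left (not_not.2 hβ)
    cases m with
    | zero => exact (mul_eq_zero.1 h₀).resolve_left (by simpa [eq_comm] using hmμ)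
    | succ k =>
      have h := hrec k
      rw [hβ, zero_mul, zero_add] at h
      exact (mul_eq_zero.1 h).resolve_left (by push_cast at hmμ; exact sub_ne_zero.2 hmμ)
  · by_contra hgm
    -- a nonzero coefficient propagates upwards forever, contradicting finite support
    have hnz : ∀ k, g (m + k) ≠ 0 := by
      intro k
      induction k with
      | zero => exact hgm
      | succ k ih =>
        intro hk
        have h := hrec (m + k)
        rw [← add_assoc] at hk
        rw [hk, mul_zero, add_zero] at h
        exact ih ((mul_eq_zero.1 h).resolve_left hβ)
    obtain ⟨N, hN⟩ := Set.Finite.bddAbove hg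
    have := hN (hnz (N + 1))
    omega

namespace HVData

open Submodule

variable {Γ : AddSubgroup ℂ} {V : Type*} [LieRing V] [LieAlgebra ℂ V] (hv : HVData Γ V)

lemma H_mem_Hspan (α : Γ) (i : ℕ) : hv.H α i ∈ hv.Hspan :=
  subset_span ⟨(α, i), rfl⟩

lemma lie_L_zero_H_zero_one (i : ℕ) : ⁅hv.L 0 i, hv.H 0 1⁆ = hv.H 0 i := by
  simp [hv.lie_L_H]

lemma Hspan_eq_span_basis_inr : hv.Hspan = span ℂ (hv.basis '' Set.range Sum.inr) := by
  rw [Hspan, ← Set.range_comp]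
  congr
  ext p
  simp [hv.basis_inr]

lemma mem_Hspan_iff {u : V} : u ∈ hv.Hspan ↔ ∀ p, hv.basis.repr u (.inl p) = 0 := by
  rw [Hspan_eq_span_basis_inr, Module.Basis.mem_span_image]
  constructor
  · intro h p
    by_contra hp
    obtain ⟨q, hq⟩ := h (Finsupp.mem_support_iff.2 hp)
    cases hq
  · rintro h (p | p) hp
    · exact absurd (h p) (Finsupp.mem_support_iff.1 hp)
    · exact ⟨p, rfl⟩

lemma lie_mem_Hspan {h : V} (hh : h ∈ hv.Hspan) (v : V) : ⁅h, v⁆ ∈ hv.Hspan := by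
  induction hh using span_induction with
  | mem x hx =>
    obtain ⟨⟨α, i⟩, rfl⟩ := hx
    have hle : ⊤ ≤ hv.Hspan.comap (LieAlgebra.ad ℂ V (hv.H α i)) := by
      rw [← hv.basis.span_eq, span_le]
      rintro _ ⟨⟨β, j⟩ | ⟨β, j⟩, rfl⟩
      · rw [SetLike.mem_coe, mem_comap, LieAlgebra.ad_apply, hv.basis_inl, ← lie_skew,
          hv.lie_L_H]
        exact neg_mem (add_mem (smul_mem _ _ (hv.H_mem_Hspan _ _))
          (smul_mem _ _ (hv.H_mem_Hspan _ _)))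
      · simp [hv.basis_inr, hv.lie_H_H]
    exact hle mem_top
  | zero => simp
  | add x y _ _ hx hy => rw [add_lie]; exact add_mem hx hy
  | smul a x _ hx => rw [smul_lie]; exact smul_mem _ _ hx

lemma lie_eq_zero_of_mem_Hspan {h h' : V} (hh : h ∈ hv.Hspan) (hh' : h' ∈ hv.Hspan) :
    ⁅h, h'⁆ = 0 := by
  induction hh using span_induction with
  | mem x hx =>
    obtain ⟨⟨α, i⟩, rfl⟩ := hx
    induction hh' using span_induction with
    | mem y hy => obtain ⟨⟨β, j⟩, rfl⟩ := hy; exact hv.lie_H_H _ _ _ _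
    | zero => simp
    | add y z _ _ hy hz => rw [lie_add, hy, hz, add_zero]
    | smul a y _ hy => rw [lie_smul, hy, smul_zero]
  | zero => simp
  | add x y _ _ hx hy => rw [add_lie, hx, hy, add_zero]
  | smul a x _ hx => rw [smul_lie, hx, smul_zero]

lemma lie_eq_lie_of_sub_mem_Hspan {x y h : V} (hxy : x - y ∈ hv.Hspan) (hh : h ∈ hv.Hspan) :
    ⁅x, h⁆ = ⁅y, h⁆ := by
  rw [← sub_eq_zero, ← sub_lie]
  exact hv.lie_eq_zero_of_mem_Hspan hxy hh

lemma repr_lie_eq_of_basis {x : V} {k : (↥Γ × ℕ) ⊕ (↥Γ × ℕ)} {φ : V →ₗ[ℂ] ℂ}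
    (h : ∀ i, hv.basis.repr ⁅x, hv.basis i⁆ k = φ (hv.basis i)) (u : V) :
    hv.basis.repr ⁅x, u⁆ k = φ u :=
  LinearMap.congr_fun
    (hv.basis.ext
      (f₁ := Finsupp.lapply k ∘ₗ hv.basis.repr.toLinearMap ∘ₗ LieAlgebra.ad ℂ V x) h) u

lemma repr_lie_L_zero_one_inl_zero (u : V) (β : Γ) :
    hv.basis.repr ⁅hv.L 0 1, u⁆ (.inl (β, 0)) = -hv.basis.repr u (.inl (β, 0)) := by
  refine hv.repr_lie_eq_of_basis (φ := -hv.basis.coord (.inl (β, 0))) (fun i => ?_) u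
  simp only [LinearMap.neg_apply, Module.Basis.coord_apply, Module.Basis.repr_self]
  rcases i with ⟨α, n⟩ | ⟨α, n⟩
  · rw [hv.basis_inl, hv.lie_L_L, ← hv.basis_inl, ← hv.basis_inl]
    obtain rfl | hαβ := eq_or_ne α β
    · simp [Finsupp.single_apply]
    · simp [hαβ]
  · rw [hv.basis_inr, hv.lie_L_H, ← hv.basis_inr, ← hv.basis_inr]
    simp

lemma repr_lie_L_zero_one_inl_succ (u : V) (β : Γ) (m : ℕ) :
    hv.basis.repr ⁅hv.L 0 1, u⁆ (.inl (β, m + 1)) =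
      β * hv.basis.repr u (.inl (β, m)) + m * hv.basis.repr u (.inl (β, m + 1)) := by
  refine hv.repr_lie_eq_of_basis (φ := (β : ℂ) • hv.basis.coord (.inl (β, m))
    + (m : ℂ) • hv.basis.coord (.inl (β, m + 1))) (fun i => ?_) u
  simp only [LinearMap.add_apply, LinearMap.smul_apply, Module.Basis.coord_apply,
    Module.Basis.repr_self]
  rcases i with ⟨α, n⟩ | ⟨α, n⟩
  · rw [hv.basis_inl, hv.lie_L_L, ← hv.basis_inl, ← hv.basis_inl]
    obtain rfl | hαβ := eq_or_ne α β
    · simp only [map_add, map_smul, Module.Basis.repr_self, Finsupp.add_apply,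
        Finsupp.smul_apply, Finsupp.single_apply, smul_eq_mul, zero_add, add_tsub_cancel_left,
        Sum.inl.injEq, Prod.mk.injEq, true_and]
      split_ifs <;> (try subst_vars) <;> first | omega | (push_cast; ring)
    · simp [hαβ]
  · rw [hv.basis_inr, hv.lie_L_H, ← hv.basis_inr, ← hv.basis_inr]
    simp

lemma repr_lie_L_zero_one_inr_zero (u : V) (β : Γ) :
    hv.basis.repr ⁅hv.L 0 1, u⁆ (.inr (β, 0)) = 0 := by
  refine hv.repr_lie_eq_of_basis (φ := 0) (fun i => ?_) u
  rcases i with ⟨α, n⟩ | ⟨α, n⟩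
  · rw [hv.basis_inl, hv.lie_L_L, ← hv.basis_inl, ← hv.basis_inl]
    simp
  · rw [hv.basis_inr, hv.lie_L_H, ← hv.basis_inr, ← hv.basis_inr]
    simp [Finsupp.single_apply]

lemma repr_lie_L_zero_one_inr_succ (u : V) (β : Γ) (m : ℕ) :
    hv.basis.repr ⁅hv.L 0 1, u⁆ (.inr (β, m + 1)) =
      β * hv.basis.repr u (.inr (β, m)) + (m + 1) * hv.basis.repr u (.inr (β, m + 1)) := by
  refine hv.repr_lie_eq_of_basis (φ := (β : ℂ) • hv.basis.coord (.inr (β, m))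
    + ((m : ℂ) + 1) • hv.basis.coord (.inr (β, m + 1))) (fun i => ?_) u
  simp only [LinearMap.add_apply, LinearMap.smul_apply, Module.Basis.coord_apply,
    Module.Basis.repr_self]
  rcases i with ⟨α, n⟩ | ⟨α, n⟩
  · rw [hv.basis_inl, hv.lie_L_L, ← hv.basis_inl, ← hv.basis_inl]
    simp
  · rw [hv.basis_inr, hv.lie_L_H, ← hv.basis_inr, ← hv.basis_inr]
    obtain rfl | hαβ := eq_or_ne α β
    · simp only [map_add, map_smul, Module.Basis.repr_self, Finsupp.add_apply,
        Finsupp.smul_apply, Finsupp.single_apply, smul_eq_mul, zero_add, add_tsub_cancel_left,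
        Sum.inr.injEq, Prod.mk.injEq, true_and]
      split_ifs <;> (try subst_vars) <;> first | omega | (push_cast; ring)
    · simp [hαβ]

lemma repr_lie_L_zero_zero_inl (u : V) (β : Γ) (m : ℕ) :
    hv.basis.repr ⁅hv.L 0 0, u⁆ (.inl (β, m)) =
      β * hv.basis.repr u (.inl (β, m)) + (m + 1) * hv.basis.repr u (.inl (β, m + 1)) := by
  refine hv.repr_lie_eq_of_basis (φ := (β : ℂ) • hv.basis.coord (.inl (β, m))
    + ((m : ℂ) + 1) • hv.basis.coord (.inl (β, m + 1))) (fun i => ?_) u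
  simp only [LinearMap.add_apply, LinearMap.smul_apply, Module.Basis.coord_apply,
    Module.Basis.repr_self]
  rcases i with ⟨α, n⟩ | ⟨α, n⟩
  · rw [hv.basis_inl, hv.lie_L_L, ← hv.basis_inl, ← hv.basis_inl]
    obtain rfl | hαβ := eq_or_ne α β
    · rcases n with _ | n
      · simp [Finsupp.single_apply]
      · simp only [map_add, map_smul, Module.Basis.repr_self, Finsupp.add_apply,
        Finsupp.smul_apply, Finsupp.single_apply, smul_eq_mul, zero_add, Sum.inl.injEq,
        Prod.mk.injEq, true_and, Nat.add_sub_cancel]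
        split_ifs <;> (try subst_vars) <;> first | omega | (push_cast; ring)
    · simp [hαβ]
  · rw [hv.basis_inr, hv.lie_L_H, ← hv.basis_inr, ← hv.basis_inr]
    simp

lemma repr_inl_eq_zero_of_lie_L_zero_one_sub_smul_mem {μ : ℂ} {u : V}
    (hu : ⁅hv.L 0 1, u⁆ - μ • u ∈ hv.Hspan) {β : Γ} {m : ℕ}
    (hm : β ≠ 0 ∨ (m : ℂ) ≠ μ + 1) :
    hv.basis.repr u (.inl (β, m)) = 0 := by
  have hcoord (n : ℕ) :
      hv.basis.repr ⁅hv.L 0 1, u⁆ (.inl (β, n)) = μ * hv.basis.repr u (.inl (β, n)) := by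
    simpa [sub_eq_zero] using hv.mem_Hspan_iff.1 hu (β, n)
  refine eq_zero_of_recurrence (β := β) (μ := μ + 1)
    (g := fun n => hv.basis.repr u (.inl (β, n)))
    ((hv.basis.repr u).hasFiniteSupport.fun_comp_of_injective
      (Sum.inl_injective.comp (Prod.mk_right_injective β)))
    ?_ (fun n => ?_) (by simpa using hm)
  · linear_combination -(hv.repr_lie_L_zero_one_inl_zero u β).symm.trans (hcoord 0)
  · linear_combination (hv.repr_lie_L_zero_one_inl_succ u β n).symm.trans (hcoord (n + 1))

lemma repr_inr_eq_zero_of_lie_L_zero_one_eq_smul {μ : ℂ} {u : V}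
    (hu : ⁅hv.L 0 1, u⁆ = μ • u) {β : Γ} {m : ℕ} (hm : β ≠ 0 ∨ (m : ℂ) ≠ μ) :
    hv.basis.repr u (.inr (β, m)) = 0 := by
  have hcoord (n : ℕ) :
      hv.basis.repr ⁅hv.L 0 1, u⁆ (.inr (β, n)) = μ * hv.basis.repr u (.inr (β, n)) := by
    simp [hu]
  refine eq_zero_of_recurrence (β := β) (μ := μ)
    (g := fun n => hv.basis.repr u (.inr (β, n)))
    ((hv.basis.repr u).hasFiniteSupport.fun_comp_of_injective
      (Sum.inr_injective.comp (Prod.mk_right_injective β)))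
    ?_ (fun n => ?_) (by simpa using hm)
  · linear_combination -(hv.repr_lie_L_zero_one_inr_zero u β).symm.trans (hcoord 0)
  · linear_combination (hv.repr_lie_L_zero_one_inr_succ u β n).symm.trans (hcoord (n + 1))

lemma eq_smul_H_of_lie_L_zero_one_eq {n : ℕ} {u : V} (huH : u ∈ hv.Hspan)
    (hu : ⁅hv.L 0 1, u⁆ = (n : ℂ) • u) :
    u = hv.basis.repr u (.inr (0, n)) • hv.H 0 n := by
  apply hv.basis.repr.injective
  ext (p | ⟨β, m⟩)
  · simp [← hv.basis_inr, hv.mem_Hspan_iff.1 huH p]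
  · by_cases h : (β, m) = (0, n)
    · simp [h, ← hv.basis_inr]
    · have hβm : β ≠ 0 ∨ (m : ℂ) ≠ n := by
        simp only [Prod.mk.injEq, not_and_or] at h
        exact h.imp_right (by exact_mod_cast ·)
      rw [hv.repr_inr_eq_zero_of_lie_L_zero_one_eq_smul hu hβm, ← hv.basis_inr, map_smul,
        Module.Basis.repr_self, Finsupp.smul_apply,
        Finsupp.single_eq_of_ne (Sum.inr_injective.ne h), smul_zero]

lemma mem_Hspan_of_lie_eq_self {x₁ x₀ u : V} {t : ℂ} (ht : t ≠ 0)
    (h₁ : x₁ - hv.L 0 1 ∈ hv.Hspan) (h₀ : x₀ - t • hv.L 0 0 ∈ hv.Hspan)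
    (hu₁ : ⁅x₁, u⁆ = u) (hu₀ : ⁅x₀, u⁆ ∈ hv.Hspan) : u ∈ hv.Hspan := by
  have hL₁ : ⁅hv.L 0 1, u⁆ - (1 : ℂ) • u ∈ hv.Hspan := by
    rw [one_smul]
    have h := hv.lie_mem_Hspan (neg_mem h₁) u
    rwa [neg_sub, sub_lie, hu₁] at h
  have hL₂ : hv.basis.repr u (.inl (0, 2)) = 0 := by
    have h := hv.mem_Hspan_iff.1 (hv.lie_mem_Hspan h₀ u) (0, 1)
    rw [sub_lie, map_sub, Finsupp.sub_apply, hv.mem_Hspan_iff.1 hu₀, smul_lie, map_smul,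
      Finsupp.smul_apply, hv.repr_lie_L_zero_zero_inl] at h
    simpa [ht] using h
  refine hv.mem_Hspan_iff.2 fun ⟨β, m⟩ => ?_
  by_cases h : (β, m) = (0, 2)
  · rw [h]
    exact hL₂
  · simp only [Prod.mk.injEq, not_and_or] at h
    exact hv.repr_inl_eq_zero_of_lie_L_zero_one_sub_smul_mem hL₁
      (h.imp_right (by exact_mod_cast ·))

lemma map_H_zero_one {σ : V ≃ₗ⁅ℂ⁆ V} {c e : ℂ} (hc : c ≠ 0)
    (h₁ : σ (hv.L 0 1) - hv.L 0 1 ∈ hv.Hspan)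
    (h₀ : σ (hv.L 0 0) - c⁻¹ • hv.L 0 0 ∈ hv.Hspan)
    (hH₀ : σ (hv.H 0 0) = e • hv.H 0 0) : σ (hv.H 0 1) = (e * c) • hv.H 0 1 := by
  have hu₁ : ⁅σ (hv.L 0 1), σ (hv.H 0 1)⁆ = σ (hv.H 0 1) := by
    rw [← σ.map_lie, hv.lie_L_zero_H_zero_one]
  have hu₀ : ⁅σ (hv.L 0 0), σ (hv.H 0 1)⁆ = e • hv.H 0 0 := by
    rw [← σ.map_lie, hv.lie_L_zero_H_zero_one, hH₀]
  have huH : σ (hv.H 0 1) ∈ hv.Hspan :=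
    hv.mem_Hspan_of_lie_eq_self (inv_ne_zero hc) h₁ h₀ hu₁
      (hu₀ ▸ smul_mem _ _ (hv.H_mem_Hspan 0 0))
  have hu : σ (hv.H 0 1) = hv.basis.repr (σ (hv.H 0 1)) (.inr (0, 1)) • hv.H 0 1 := by
    refine hv.eq_smul_H_of_lie_L_zero_one_eq huH ?_
    rw [Nat.cast_one, one_smul, ← hv.lie_eq_lie_of_sub_mem_Hspan h₁ huH, hu₁]
  set a := hv.basis.repr (σ (hv.H 0 1)) (.inr (0, 1))
  have ha : c⁻¹ * a = e := by
    refine smul_left_injective ℂ (hv.basis_inr 0 0 ▸ hv.basis.ne_zero _)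
      (?_ : (c⁻¹ * a) • hv.H 0 0 = e • hv.H 0 0)
    rw [← hu₀, hv.lie_eq_lie_of_sub_mem_Hspan h₀ huH, hu, smul_lie, lie_smul,
      hv.lie_L_zero_H_zero_one, smul_smul]
  rw [hu, ← ha, mul_comm c⁻¹, inv_mul_cancel_right₀ hc]

end HVData

theorem HV_automorphism_on_H_0_j_general (Γ : AddSubgroup ℂ)
    {V : Type*} [LieRing V] [LieAlgebra ℂ V] (hv : HVData Γ V)
    (σ : V ≃ₗ⁅ℂ⁆ V) (c : ℂ) (hc0 : c ≠ 0) (e : ℂ)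
    (hL : ∀ i : ℕ, σ (hv.L 0 i) - c ^ ((i : ℤ) - 1) • hv.L 0 i ∈ hv.Hspan)
    (hH0 : σ (hv.H 0 0) = e • hv.H 0 0) :
    ∀ j : ℕ, σ (hv.H 0 j) = (e * c ^ j) • hv.H 0 j := by
  intro j
  have hH₁ : σ (hv.H 0 1) = (e * c) • hv.H 0 1 :=
    hv.map_H_zero_one hc0 (by simpa using hL 1) (by simpa [zpow_neg_one] using hL 0) hH0
  calc σ (hv.H 0 j) = ⁅σ (hv.L 0 j), σ (hv.H 0 1)⁆ := by
        rw [← σ.map_lie, hv.lie_L_zero_H_zero_one]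
    _ = ⁅c ^ ((j : ℤ) - 1) • hv.L 0 j, (e * c) • hv.H 0 1⁆ := by
        rw [hH₁, hv.lie_eq_lie_of_sub_mem_Hspan (hL j)
          (Submodule.smul_mem _ _ (hv.H_mem_Hspan 0 1))]
    _ = (e * c ^ j) • hv.H 0 j := by
        rw [smul_lie, lie_smul, hv.lie_L_zero_H_zero_one, smul_smul, zpow_sub_one₀ hc0,
          zpow_natCast]
        field_simp

/-- Let `σ` be an automorphism of `HV` with `σ(L_{0,i}) ≡ c^{i-1} L_{0,i}`
modulo `H` for all `i`, and `σ(H_{0,0}) = e H_{0,0}`.  Then `σ(H_{0,j}) = e c^j H_{0,j}` for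
all `j ∈ ℤ₊`. -/
theorem HV_automorphism_on_H_0_j (Γ : AddSubgroup ℂ) (hΓ : Γ ≠ ⊥)
    {V : Type*} [LieRing V] [LieAlgebra ℂ V] (hv : HVData Γ V)
    (σ : V ≃ₗ⁅ℂ⁆ V) (c : ℂ) (hc0 : c ≠ 0) (e : ℂ) (he : e ≠ 0)
    (hL : ∀ i : ℕ, σ (hv.L 0 i) - c ^ ((i : ℤ) - 1) • hv.L 0 i ∈ hv.Hspan)
    (hH0 : σ (hv.H 0 0) = e • hv.H 0 0) :
    ∀ j : ℕ, σ (hv.H 0 j) = (e * c ^ j) • hv.H 0 j :=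
  HV_automorphism_on_H_0_j_general Γ hv σ c hc0 e hL hH0
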